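/- Let (a_i)_{1≤i≤m} be i.i.d. standard Gaussian random variables and let λ₁, …, λ_m ∈ (0, 1/4] and C > 0. If C λ_i < 1/(4λ_i) for each i — in particular if the λ_i are small enough that Cλ_i ≤ 1/(8λ_i), say — then E[exp(−(C/2)∑_i |a_i|/√λ_i + C ∑_i λ_i a_i²)] ≤ C' ∏_{i=1}^m λ_i^{1/2} for a constant C' depending only on m and C. -/

import Mathlib

/-!
The exponent is a sum of one-variable terms, so by independence the expectation factorizes into
one-dimensional Gaussian integrals `E[exp(-α|a| + β a²)]` with `α = C/(2√λ)` and `β = Cλ`.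
Against the density `(2π)^{-1/2} e^{-x²/2}`, and for `β ≤ 1/2`, such an integral is at most
`(1/2) ∫ e^{-α|x|} dx = 1/α = 2√λ/C`.
-/

open MeasureTheory ProbabilityTheory Real Set

lemma integrable_exp_neg_mul_abs {α : ℝ} (hα : 0 < α) :
    Integrable fun x : ℝ ↦ exp (-(α * |x|)) := by
  have hIic : IntegrableOn (fun x : ℝ ↦ exp (-(α * |x|))) (Iic 0) :=
    (integrableOn_exp_mul_Iic hα 0).congr_fun
      (fun x hx ↦ by simp only [abs_of_nonpos (mem_Iic.1 hx), mul_neg, neg_neg]) measurableSet_Iic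
  have hIoi : IntegrableOn (fun x : ℝ ↦ exp (-(α * |x|))) (Ioi 0) :=
    (integrableOn_exp_mul_Ioi (neg_lt_zero.2 hα) 0).congr_fun
      (fun x hx ↦ by simp only [abs_of_pos (mem_Ioi.1 hx), neg_mul]) measurableSet_Ioi
  have h := integrableOn_union.2 ⟨hIic, hIoi⟩
  rwa [Iic_union_Ioi, integrableOn_univ] at h

lemma integral_exp_neg_mul_abs {α : ℝ} (hα : 0 < α) :
    ∫ x : ℝ, exp (-(α * |x|)) = 2 / α := by
  rw [integral_comp_abs (f := fun y ↦ exp (-(α * y)))]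
  simp_rw [← neg_mul]
  rw [integral_exp_mul_Ioi (neg_lt_zero.2 hα)]
  simp only [mul_zero, exp_zero, neg_div_neg_eq]
  ring

lemma not_integrable_exp_neg_mul_abs_add_mul_sq (α : ℝ) {b : ℝ} (hb : 0 < b) :
    ¬ Integrable fun x : ℝ ↦ exp (-(α * |x|) + b * x ^ 2) := by
  intro h
  set x₀ := max 0 (α / b)
  have hge : ∀ x ∈ Ici x₀, ‖(1 : ℝ)‖ ≤ exp (-(α * |x|) + b * x ^ 2) := by
    intro x hx
    have hx0 : 0 ≤ x := le_trans (le_max_left _ _) hx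
    have hαx : α ≤ b * x := (div_le_iff₀' hb).1 (le_trans (le_max_right _ _) hx)
    rw [norm_one, abs_of_nonneg hx0, one_le_exp_iff]
    nlinarith
  have hone : IntegrableOn (fun _ ↦ (1 : ℝ)) (Ici x₀) :=
    h.integrableOn.mono' aestronglyMeasurable_const
      ((ae_restrict_iff' measurableSet_Ici).2 (.of_forall hge))
  simp [integrableOn_const_iff] at hone

lemma integral_exp_neg_mul_abs_add_mul_sq_le {α : ℝ} (hα : 0 < α) (b : ℝ) :
    ∫ x : ℝ, exp (-(α * |x|) + b * x ^ 2) ≤ 2 / α := by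
  rcases le_or_gt b 0 with hb | hb
  · rw [← integral_exp_neg_mul_abs hα]
    refine integral_mono_of_nonneg (.of_forall fun x ↦ (exp_pos _).le)
      (integrable_exp_neg_mul_abs hα) (.of_forall fun x ↦ ?_)
    exact exp_le_exp.2 (by nlinarith [sq_nonneg x])
  · -- the integrand is not integrable, so the Bochner integral is the junk value `0`
    rw [integral_undef (not_integrable_exp_neg_mul_abs_add_mul_sq α hb)]
    positivity

lemma integral_exp_neg_mul_abs_add_mul_sq_gaussianReal_le {α : ℝ} (hα : 0 < α) (β : ℝ) :
    ∫ x, exp (-(α * |x|) + β * x ^ 2) ∂gaussianReal 0 1 ≤ 1 / α := by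
  have hpdf : ∀ x, gaussianPDFReal 0 1 x • exp (-(α * |x|) + β * x ^ 2)
      = (√(2 * π))⁻¹ * exp (-(α * |x|) + (β - 1 / 2) * x ^ 2) := by
    intro x
    simp only [gaussianPDFReal, NNReal.coe_one, mul_one, sub_zero, smul_eq_mul, mul_assoc,
      ← exp_add]
    ring_nf
  have hsqrt : 2 ≤ √(2 * π) := (le_sqrt zero_le_two (by positivity)).2 (by nlinarith [pi_gt_three])
  rw [integral_gaussianReal_eq_integral_smul one_ne_zero]
  simp_rw [hpdf]
  rw [integral_const_mul]
  calc (√(2 * π))⁻¹ * ∫ x, exp (-(α * |x|) + (β - 1 / 2) * x ^ 2)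
      ≤ 2⁻¹ * (2 / α) :=
        mul_le_mul (inv_anti₀ two_pos hsqrt) (integral_exp_neg_mul_abs_add_mul_sq_le hα _)
          (integral_nonneg fun x ↦ (exp_pos _).le) (by norm_num)
    _ = 1 / α := by ring

/-- For i.i.d. standard Gaussians `(a_i)_{1≤i≤m}`, `λ_i ∈ (0, 1/4]` and `C > 0` with
`C λ_i < 1/(4λ_i)` for each `i`, one has
`E[exp(−(C/2) ∑ |a_i|/√λ_i + C ∑ λ_i a_i²)] ≤ C' ∏ λ_i^{1/2}` for a constant `C'`
depending only on `m` and `C`. -/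
theorem gaussian_product_expectation_bound (m : ℕ) (C : ℝ) (hC : 0 < C) :
    ∃ C' : ℝ, 0 < C' ∧
      ∀ (Ω : Type) [MeasurableSpace Ω] (P : Measure Ω) [IsProbabilityMeasure P]
        (a : Fin m → Ω → ℝ),
        (∀ i, Measurable (a i)) →
        iIndepFun a P →
        (∀ i, Measure.map (a i) P = gaussianReal 0 1) →
        ∀ lam : Fin m → ℝ, (∀ i, lam i ∈ Set.Ioc (0 : ℝ) (1 / 4)) →
          (∀ i, C * lam i < 1 / (4 * lam i)) →
          (∫ ω, Real.exp (-(C / 2) * ∑ i, |a i ω| / Real.sqrt (lam i)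
              + C * ∑ i, lam i * (a i ω) ^ 2) ∂P)
            ≤ C' * ∏ i, Real.sqrt (lam i) := by
  refine ⟨(2 / C) ^ m, by positivity, fun Ω _ P _ a ha hind hlaw lam hlam _ ↦ ?_⟩
  set φ : Fin m → ℝ → ℝ := fun i x ↦ exp (-(C / (2 * √(lam i)) * |x|) + C * lam i * x ^ 2)
  have hsplit : ∀ ω, exp (-(C / 2) * ∑ i, |a i ω| / √(lam i) + C * ∑ i, lam i * (a i ω) ^ 2)
      = ∏ i, φ i (a i ω) := fun ω ↦ by
    rw [Finset.mul_sum, Finset.mul_sum, ← Finset.sum_add_distrib, exp_sum]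
    congr 1 with i
    simp only [φ]
    ring_nf
  have hφ : ∀ i, AEStronglyMeasurable (φ i) (P.map (a i)) := fun i ↦
    (by fun_prop : Continuous (φ i)).aestronglyMeasurable
  calc ∫ ω, exp (-(C / 2) * ∑ i, |a i ω| / √(lam i) + C * ∑ i, lam i * (a i ω) ^ 2) ∂P
      = ∏ i, ∫ x, φ i x ∂gaussianReal 0 1 := by
        simp_rw [hsplit, hind.integral_fun_prod_comp (fun i ↦ (ha i).aemeasurable) hφ]
        exact Finset.prod_congr rfl fun i _ ↦ by
          rw [← hlaw i, integral_map (ha i).aemeasurable (hφ i)]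
    _ ≤ ∏ i, 2 / C * √(lam i) := by
        refine Finset.prod_le_prod (fun i _ ↦ integral_nonneg fun x ↦ (exp_pos _).le) fun i _ ↦ ?_
        have hsqrt : 0 < √(lam i) := sqrt_pos.2 (hlam i).1
        calc ∫ x, φ i x ∂gaussianReal 0 1 ≤ 1 / (C / (2 * √(lam i))) :=
              integral_exp_neg_mul_abs_add_mul_sq_gaussianReal_le (by positivity) _
          _ = 2 / C * √(lam i) := by field_simp
    _ = (2 / C) ^ m * ∏ i, √(lam i) := by
        rw [Finset.prod_mul_distrib, Finset.prod_const, Finset.card_univ, Fintype.card_fin]
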